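/- If u is a weak supersolution of L_K u + V u = 0 in Ω and u ≥ 0 a.e. on ℝⁿ \ Ω, then u ≥ 0 a.e. on ℝⁿ (weak maximum principle). -/

import Mathlib

/-!
Test the supersolution inequality with `u⁻`, an admissible test function since `u ≥ 0` outside
`Ω`. Because `(a - b)(a⁻ - b⁻) ≤ -(a⁻ - b⁻)²` and `u u⁻ ≤ 0`, both of its terms are `≤ 0`, so the
integrand `(u(x) - u(y))(u⁻(x) - u⁻(y)) K(x - y)` vanishes a.e. on `ℝ^{2n}_Ω`, and `K > 0` forces
`u⁻(x) = u⁻(y)` there. For `x ∈ Ω` and `y` in `ℝⁿ \ Ω`, which has positive measure as `Ω` is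
bounded, `u⁻(y) = 0`; hence `u⁻ = 0` a.e. in `Ω`.
-/

open MeasureTheory Real Filter
open scoped ENNReal RealInnerProductSpace

noncomputable section

/-- Euclidean space ℝⁿ. -/
abbrev En (n : ℕ) := EuclideanSpace ℝ (Fin n)

/-- The squared Gagliardo seminorm `[u]_s²`. -/
def gagliardoSq (n : ℕ) (s : ℝ) (u : En n → ℝ) : ℝ≥0∞ :=
  ∫⁻ p : En n × En n,
    ENNReal.ofReal ((u p.1 - u p.2) ^ 2 * ‖p.1 - p.2‖ ^ (-((n : ℝ) + 2 * s)))

/-- `K` is a symmetric measurable kernel comparable to `c⬝|y|^{-(n+2s)}`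
with ellipticity constants `lam ≤ Lam`. -/
def IsKernel (n : ℕ) (s lam Lam c : ℝ) (K : En n → ℝ) : Prop :=
  Measurable K ∧ (∀ y : En n, K (-y) = K y) ∧
    ∀ y : En n, y ≠ 0 →
      lam * c * ‖y‖ ^ (-((n : ℝ) + 2 * s)) ≤ K y ∧
        K y ≤ Lam * c * ‖y‖ ^ (-((n : ℝ) + 2 * s))

/-- The nonlocal operator `L_K` applied to a test function. -/
def LK (n : ℕ) (K φ : En n → ℝ) (x : En n) : ℝ :=
  (1 / 2) * ∫ y : En n, (2 * φ x - φ (x + y) - φ (x - y)) * K y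

/-- `V ∈ L^q_loc(ℝⁿ)`. -/
def LocLq (n : ℕ) (q : ℝ) (V : En n → ℝ) : Prop :=
  ∀ A : Set (En n), IsCompact A → MemLp V (ENNReal.ofReal q) (volume.restrict A)

/-- The space `X^s_0(Ω)`: measurable functions vanishing a.e. outside `Ω`
with finite Gagliardo seminorm. -/
def Xs0 (n : ℕ) (s : ℝ) (Ω : Set (En n)) : Set (En n → ℝ) :=
  {u | Measurable u ∧ (∀ᵐ x : En n ∂volume, x ∉ Ω → u x = 0) ∧ gagliardoSq n s u < ⊤}

/-- `∫_Ω V u²`. -/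
def VIntSq (n : ℕ) (V : En n → ℝ) (Ω : Set (En n)) (u : En n → ℝ) : ℝ≥0∞ :=
  ∫⁻ x in Ω, ENNReal.ofReal (V x * u x ^ 2)

/-- The space `Y^s_0(Ω) = X^s_0(Ω) ∩ L²_V(Ω)`. -/
def Ys0 (n : ℕ) (s : ℝ) (Ω : Set (En n)) (V : En n → ℝ) : Set (En n → ℝ) :=
  {u | u ∈ Xs0 n s Ω ∧ VIntSq n V Ω u < ⊤}

/-- The squared `Y^s_0(Ω)` norm: `[u]_s² + ∫_Ω V u²`. -/
def YnormSq (n : ℕ) (s : ℝ) (Ω : Set (En n)) (V : En n → ℝ) (u : En n → ℝ) : ℝ≥0∞ :=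
  gagliardoSq n s u + VIntSq n V Ω u

/-- The kernel quadratic form `∬ (u(x)-u(y))² K(x-y) dx dy` (as an `ℝ≥0∞`-integral). -/
def kerSq (n : ℕ) (K : En n → ℝ) (u : En n → ℝ) : ℝ≥0∞ :=
  ∫⁻ p : En n × En n, ENNReal.ofReal ((u p.1 - u p.2) ^ 2 * K (p.1 - p.2))

/-- The bilinear form `(1/2)∬ (u(x)-u(y))(φ(x)-φ(y)) K(x-y) dx dy`. -/
def bilin (n : ℕ) (K : En n → ℝ) (u φ : En n → ℝ) : ℝ :=
  (1 / 2) * ∫ p : En n × En n, (u p.1 - u p.2) * (φ p.1 - φ p.2) * K (p.1 - p.2)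

/-- The energy functional `E_V`. -/
def energy (n : ℕ) (K V f : En n → ℝ) (Ω : Set (En n)) (v : En n → ℝ) : ℝ :=
  (1 / 2) * (kerSq n K v).toReal + (VIntSq n V Ω v).toReal - 2 * ∫ x in Ω, f x * v x

/-- The region `ℝ^{2n}_Ω = (ℝⁿ×ℝⁿ) \ (Ωᶜ×Ωᶜ)`. -/
def R2n (n : ℕ) (Ω : Set (En n)) : Set (En n × En n) := (Ωᶜ ×ˢ Ωᶜ)ᶜ

/-- The squared Gagliardo seminorm restricted to `ℝ^{2n}_Ω`. -/
def gagliardoSqOn (n : ℕ) (s : ℝ) (Ω : Set (En n)) (u : En n → ℝ) : ℝ≥0∞ :=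
  ∫⁻ p in R2n n Ω,
    ENNReal.ofReal ((u p.1 - u p.2) ^ 2 * ‖p.1 - p.2‖ ^ (-((n : ℝ) + 2 * s)))

/-- The kernel quadratic form restricted to `ℝ^{2n}_Ω`. -/
def kerSqOn (n : ℕ) (Ω : Set (En n)) (K : En n → ℝ) (u : En n → ℝ) : ℝ≥0∞ :=
  ∫⁻ p in R2n n Ω, ENNReal.ofReal ((u p.1 - u p.2) ^ 2 * K (p.1 - p.2))

/-- The bilinear form restricted to `ℝ^{2n}_Ω`. -/
def bilinOn (n : ℕ) (Ω : Set (En n)) (K : En n → ℝ) (u φ : En n → ℝ) : ℝ :=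
  (1 / 2) * ∫ p in R2n n Ω, (u p.1 - u p.2) * (φ p.1 - φ p.2) * K (p.1 - p.2)

/-- The energy functional `E_V` with the double integral over `ℝ^{2n}_Ω`. -/
def energyOn (n : ℕ) (Ω : Set (En n)) (K V f : En n → ℝ) (v : En n → ℝ) : ℝ :=
  (1 / 2) * (kerSqOn n Ω K v).toReal + (VIntSq n V Ω v).toReal - 2 * ∫ x in Ω, f x * v x

lemma sub_mul_negPart_sub_le (a b : ℝ) : (a - b) * (a⁻ - b⁻) ≤ -(a⁻ - b⁻) ^ 2 := by
  rcases le_total a 0 with ha | ha <;> rcases le_total b 0 with hb | hb <;>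
    simp only [negPart_eq_neg.2, negPart_eq_zero.2, *] <;> nlinarith

lemma sub_mul_negPart_sub_nonpos (a b : ℝ) : (a - b) * (a⁻ - b⁻) ≤ 0 :=
  (sub_mul_negPart_sub_le a b).trans (neg_nonpos.2 (sq_nonneg _))

lemma negPart_eq_of_sub_mul_negPart_sub_eq_zero {a b : ℝ} (h : (a - b) * (a⁻ - b⁻) = 0) :
    a⁻ = b⁻ := by
  have hsq : (a⁻ - b⁻) ^ 2 ≤ 0 := by linarith [sub_mul_negPart_sub_le a b]
  exact sub_eq_zero.1 (pow_eq_zero_iff two_ne_zero |>.1 (le_antisymm hsq (sq_nonneg _)))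

lemma abs_negPart_sub_negPart_le (a b : ℝ) : |a⁻ - b⁻| ≤ |a - b| := by
  calc |a⁻ - b⁻| = |max (-a) 0 - max (-b) 0| := rfl
    _ ≤ |-a - -b| := abs_max_sub_max_le_abs _ _ _
    _ = |a - b| := by rw [neg_sub_neg, abs_sub_comm]

lemma mul_negPart_nonpos (a : ℝ) : a * a⁻ ≤ 0 := by
  simpa using sub_mul_negPart_sub_nonpos a 0

lemma MeasureTheory.Measure.ae_prod_fst_ne_snd {α : Type*} [MeasurableSpace α] [MeasurableEq α]
    {μ : Measure α} [SFinite μ] [NullSingletonClass μ] : ∀ᵐ p ∂μ.prod μ, p.1 ≠ p.2 := by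
  rw [ae_iff]
  simp only [ne_eq, not_not]
  rw [Measure.prod_apply (measurableSet_eq_fun measurable_fst measurable_snd)]
  simp [Set.preimage]

lemma MeasureTheory.Measure.ae_of_ae_prod_mem_snd {α β : Type*} [MeasurableSpace α]
    [MeasurableSpace β] {μ : Measure α} {ν : Measure β} [SFinite ν] {P : α → Prop} {B : Set β}
    (hB : ν B ≠ 0)
    (h : ∀ᵐ p ∂μ.prod ν, p.2 ∈ B → P p.1) : ∀ᵐ x ∂μ, P x := by
  filter_upwards [Measure.ae_ae_of_ae_prod h] with x hx
  by_contra hP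
  exact hB (measure_eq_zero_iff_ae_notMem.2 (hx.mono fun y hy hyB => hP (hy hyB)))

lemma measure_compl_ne_zero_of_isBounded {E : Type*} [NormedAddCommGroup E] [NormedSpace ℝ E]
    [Nontrivial E] [FiniteDimensional ℝ E] [MeasurableSpace E] [BorelSpace E]
    (μ : Measure E) [μ.IsAddHaarMeasure] {s : Set E} (hs : Bornology.IsBounded s) :
    μ sᶜ ≠ 0 := by
  intro h
  have huniv := measure_univ_le_add_compl (μ := μ) s
  rw [measure_univ_of_isAddLeftInvariant, h, add_zero, top_le_iff] at huniv
  exact (hs.measure_lt_top (μ := μ)).ne huniv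

lemma integrable_sub_mul_sub_mul_of_abs_sub_le {α : Type*} [MeasurableSpace α]
    {μ : Measure (α × α)} {u φ : α → ℝ} {k : α × α → ℝ} (hu : Measurable u) (hφ : Measurable φ)
    (hk : Measurable k) (hk0 : ∀ᵐ p ∂μ, 0 ≤ k p) (hφu : ∀ x y, |φ x - φ y| ≤ |u x - u y|)
    (hfin : ∫⁻ p, ENNReal.ofReal ((u p.1 - u p.2) ^ 2 * k p) ∂μ < ⊤) :
    Integrable (fun p => (u p.1 - u p.2) * (φ p.1 - φ p.2) * k p) μ := by
  refine ⟨by fun_prop, ?_⟩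
  rw [hasFiniteIntegral_iff_norm]
  refine lt_of_le_of_lt (lintegral_mono_ae ?_) hfin
  filter_upwards [hk0] with p hp
  refine ENNReal.ofReal_le_ofReal ?_
  rw [norm_mul, norm_mul, Real.norm_of_nonneg hp, Real.norm_eq_abs, Real.norm_eq_abs, ← sq_abs,
    sq]
  exact mul_le_mul_of_nonneg_right (mul_le_mul_of_nonneg_left (hφu _ _) (abs_nonneg _)) hp

variable {n : ℕ} {s lam Lam c : ℝ} {K : En n → ℝ} {Ω : Set (En n)}

lemma IsKernel.pos (hK : IsKernel n s lam Lam c K) (hlam : 0 < lam) (hc : 0 < c) {y : En n}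
    (hy : y ≠ 0) : 0 < K y :=
  (mul_pos (mul_pos hlam hc) (rpow_pos_of_pos (norm_pos_iff.2 hy) _)).trans_le (hK.2.2 y hy).1

lemma IsKernel.ae_pos [NeZero n] (hK : IsKernel n s lam Lam c K) (hlam : 0 < lam) (hc : 0 < c) :
    ∀ᵐ p : En n × En n, 0 < K (p.1 - p.2) :=
  Measure.ae_prod_fst_ne_snd.mono fun _ hp => hK.pos hlam hc (sub_ne_zero.2 hp)

lemma IsKernel.kerSqOn_le [NeZero n] (hK : IsKernel n s lam Lam c K) (hLc : 0 ≤ Lam * c)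
    (u : En n → ℝ) :
    kerSqOn n Ω K u ≤ ENNReal.ofReal (Lam * c) * gagliardoSqOn n s Ω u := by
  rw [gagliardoSqOn, ← lintegral_const_mul' _ _ ENNReal.ofReal_ne_top]
  refine lintegral_mono_ae (ae_restrict_of_ae ?_)
  filter_upwards [Measure.ae_prod_fst_ne_snd] with p hp
  rw [← ENNReal.ofReal_mul hLc]
  refine ENNReal.ofReal_le_ofReal ?_
  calc (u p.1 - u p.2) ^ 2 * K (p.1 - p.2)
      ≤ (u p.1 - u p.2) ^ 2 * (Lam * c * ‖p.1 - p.2‖ ^ (-((n : ℝ) + 2 * s))) :=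
        mul_le_mul_of_nonneg_left (hK.2.2 _ (sub_ne_zero.2 hp)).2 (sq_nonneg _)
    _ = _ := by ring

lemma measurableSet_R2n (hΩ : MeasurableSet Ω) : MeasurableSet (R2n n Ω) :=
  (hΩ.compl.prod hΩ.compl).compl

lemma gagliardoSq_eq_gagliardoSqOn (hΩ : MeasurableSet Ω) {φ : En n → ℝ}
    (hφ : ∀ᵐ x, x ∉ Ω → φ x = 0) : gagliardoSq n s φ = gagliardoSqOn n s Ω φ := by
  have hout : ∀ᵐ p : En n × En n ∂volume.restrict (R2n n Ω)ᶜ, φ p.1 - φ p.2 = 0 := by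
    filter_upwards [ae_restrict_of_ae (Measure.quasiMeasurePreserving_fst.ae hφ),
      ae_restrict_of_ae (Measure.quasiMeasurePreserving_snd.ae hφ),
      ae_restrict_mem (measurableSet_R2n hΩ).compl] with p h1 h2 hp
    rw [R2n, compl_compl] at hp
    rw [h1 hp.1, h2 hp.2, sub_zero]
  rw [gagliardoSq, ← lintegral_add_compl _ (measurableSet_R2n hΩ), gagliardoSqOn,
    lintegral_congr_ae (g := fun _ => 0) (hout.mono fun p hp => by simp [hp]), lintegral_zero,
    add_zero]

lemma gagliardoSqOn_negPart_le (u : En n → ℝ) :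
    gagliardoSqOn n s Ω (fun x => (u x)⁻) ≤ gagliardoSqOn n s Ω u := by
  refine lintegral_mono fun p => ENNReal.ofReal_le_ofReal ?_
  exact mul_le_mul_of_nonneg_right (sq_le_sq.2 (abs_negPart_sub_negPart_le _ _))
    (rpow_nonneg (norm_nonneg _) _)

lemma VIntSq_negPart_le {V : En n → ℝ} (hV0 : ∀ x, 0 ≤ V x) (u : En n → ℝ) :
    VIntSq n V Ω (fun x => (u x)⁻) ≤ VIntSq n V Ω u := by
  refine lintegral_mono fun x => ENNReal.ofReal_le_ofReal ?_
  exact mul_le_mul_of_nonneg_left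
    (sq_le_sq.2 (by simpa using abs_negPart_sub_negPart_le (u x) 0)) (hV0 x)

lemma negPart_mem_Ys0 (hΩ : MeasurableSet Ω) {V : En n → ℝ} (hV0 : ∀ x, 0 ≤ V x)
    {u : En n → ℝ} (hu : Measurable u) (hg : gagliardoSqOn n s Ω u < ⊤)
    (hV : VIntSq n V Ω u < ⊤) (hout : ∀ᵐ x, x ∉ Ω → (u x)⁻ = 0) :
    (fun x => (u x)⁻) ∈ Ys0 n s Ω V := by
  refine ⟨⟨by fun_prop, hout, ?_⟩, (VIntSq_negPart_le hV0 u).trans_lt hV⟩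
  rw [gagliardoSq_eq_gagliardoSqOn hΩ hout]
  exact (gagliardoSqOn_negPart_le u).trans_lt hg

lemma ae_negPart_eq_of_bilinOn_negPart_nonneg [NeZero n] (hK : IsKernel n s lam Lam c K)
    (hlam : 0 < lam) (hc : 0 < c) {u : En n → ℝ} (hu : Measurable u)
    (hfin : kerSqOn n Ω K u < ⊤) (hbil : 0 ≤ bilinOn n Ω K u fun x => (u x)⁻) :
    ∀ᵐ p ∂volume.restrict (R2n n Ω), (u p.1)⁻ = (u p.2)⁻ := by
  set F : En n × En n → ℝ := fun p => (u p.1 - u p.2) * ((u p.1)⁻ - (u p.2)⁻) * K (p.1 - p.2)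
  have hKpos := ae_restrict_of_ae (s := R2n n Ω) (hK.ae_pos hlam hc)
  have hF_int : Integrable F (volume.restrict (R2n n Ω)) :=
    integrable_sub_mul_sub_mul_of_abs_sub_le hu (by fun_prop) (hK.1.comp (by fun_prop))
      (hKpos.mono fun _ h => h.le) (fun _ _ => abs_negPart_sub_negPart_le _ _) hfin
  have hnegF : ∀ᵐ p ∂volume.restrict (R2n n Ω), 0 ≤ -F p := hKpos.mono fun p hp =>
    neg_nonneg.2 (mul_nonpos_of_nonpos_of_nonneg (sub_mul_negPart_sub_nonpos _ _) hp.le)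
  have hF_zero : -F =ᵐ[volume.restrict (R2n n Ω)] 0 := by
    refine (integral_eq_zero_iff_of_nonneg_ae hnegF hF_int.neg).1 (le_antisymm ?_ ?_)
    · rw [integral_neg, neg_nonpos]
      simpa [bilinOn] using hbil
    · exact integral_nonneg_of_ae hnegF
  filter_upwards [hF_zero, hKpos] with p hp hKp
  refine negPart_eq_of_sub_mul_negPart_sub_eq_zero ?_
  simpa [F, hKp.ne'] using hp

lemma ae_eq_zero_of_ae_eq_on_R2n [NeZero n] (hΩ : MeasurableSet Ω)
    (hΩb : Bornology.IsBounded Ω) {φ : En n → ℝ} (hout : ∀ᵐ x, x ∉ Ω → φ x = 0)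
    (heq : ∀ᵐ p ∂volume.restrict (R2n n Ω), φ p.1 = φ p.2) : ∀ᵐ x, φ x = 0 := by
  have hin : ∀ᵐ x : En n, x ∈ Ω → φ x = 0 := by
    refine Measure.ae_of_ae_prod_mem_snd (ν := volume)
      (measure_compl_ne_zero_of_isBounded volume hΩb) ?_
    filter_upwards [(ae_restrict_iff' (measurableSet_R2n hΩ)).1 heq,
      Measure.quasiMeasurePreserving_snd.ae hout] with p hp h2 hy hx
    rw [hp fun h => h.1 hx]
    exact h2 hy
  filter_upwards [hin, hout] with x h1 h2
  by_cases hx : x ∈ Ω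
  · exact h1 hx
  · exact h2 hx

/-- weak maximum principle: if `u` is a weak supersolution of
`L_K u + V u = 0` in `Ω` and `u ≥ 0` a.e. on `ℝⁿ \ Ω`, then `u ≥ 0` a.e. on `ℝⁿ`. -/
theorem stmt8 (n : ℕ) (hn : 2 ≤ n) (s : ℝ)
    (c lam Lam : ℝ) (hlam : 0 < lam) (hlamLam : lam ≤ Lam) (hc : 0 < c)
    (K : En n → ℝ) (hK : IsKernel n s lam Lam c K)
    (V : En n → ℝ) (hV0 : ∀ x, 0 ≤ V x)
    (Ω : Set (En n)) (hΩo : IsOpen Ω) (hΩb : Bornology.IsBounded Ω)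
    (u : En n → ℝ) (hu_meas : Measurable u)
    (hu_g : gagliardoSqOn n s Ω u < ⊤)
    (hu_V : VIntSq n V Ω u < ⊤)
    (hsuper : ∀ φ ∈ Ys0 n s Ω V, (∀ x, 0 ≤ φ x) →
      (0 : ℝ) ≤ bilinOn n Ω K u φ + ∫ x in Ω, V x * u x * φ x)
    (hbd : ∀ᵐ x : En n ∂volume, x ∉ Ω → 0 ≤ u x) :
    ∀ᵐ x : En n ∂volume, 0 ≤ u x := by
  have : NeZero n := ⟨by omega⟩
  have hΩ : MeasurableSet Ω := hΩo.measurableSet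
  have hout : ∀ᵐ x, x ∉ Ω → (u x)⁻ = 0 := hbd.mono fun x h hx => negPart_eq_zero.2 (h hx)
  have hker : kerSqOn n Ω K u < ⊤ :=
    (hK.kerSqOn_le (mul_pos (hlam.trans_le hlamLam) hc).le u).trans_lt
      (ENNReal.mul_lt_top ENNReal.ofReal_lt_top hu_g)
  have hbil : 0 ≤ bilinOn n Ω K u fun x => (u x)⁻ := by
    have htest := hsuper _ (negPart_mem_Ys0 hΩ hV0 hu_meas hu_g hu_V hout)
      fun x => negPart_nonneg _
    have hV : ∫ x in Ω, V x * u x * (u x)⁻ ≤ 0 := integral_nonpos fun x =>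
      (mul_assoc _ _ _).trans_le (mul_nonpos_of_nonneg_of_nonpos (hV0 x) (mul_negPart_nonpos _))
    linarith
  have hneg := ae_eq_zero_of_ae_eq_on_R2n hΩ hΩb hout
    (ae_negPart_eq_of_bilinOn_negPart_nonneg hK hlam hc hu_meas hker hbil)
  exact hneg.mono fun x hx => negPart_eq_zero.1 hx
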